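/- Let K^perf be the perfection of the local field K and R° = k[τ^{±1}] the twisted Laurent polynomial ring over the residue field k. Then the left R°-module K^perf/O_{K^perf} is free, with basis given by the residue classes [ξ_j] of elements ξ_j ∈ K of normalized valuation -j for all integers j > 0 not divisible by p. Moreover the natural map R° ⊗_R (K/O_K) → K^perf/O_{K^perf} is an isomorphism, where R = k[τ]. -/

import Mathlib

/-!
STATEMENT 7: Let `K = k((t)) = LaurentSeries k` be a local field of characteristic `p` with
finite residue field `k`, `Kperf = PerfectClosure K p` its perfection, and `R = k[τ]`,
`R° = k[τ^{±1}]` the twisted (Laurent) polynomial rings.  Twisted Laurent polynomials are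
recorded as `LaurentPolynomial k` acting via `ℤ`-indexed Frobenius powers (`zpow` of the
Frobenius automorphism of the perfect field `Kperf`).  The valuation ring
`O_{Kperf} ⊆ Kperf` is the set of `ξ` all of whose `p^m`-th powers that come from `K` come
from `O_K` (`orderTop ≥ 0`).  Claims: (i) `Kperf/O_{Kperf}` is a free left `R°`-module with
basis the classes `[ξ_j]` (`ξ_j ∈ K` of normalized valuation `-j`, `p ∤ j > 0`), expressed by
unique finite `R°`-coefficient representations modulo `O_{Kperf}`; (ii) the natural map
`R° ⊗_R (K/O_K) → Kperf/O_{Kperf}` (sending `τ^{-n} ⊗ [z]` to `[z^{p^{-n}}]`) is an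
isomorphism, expressed by its injectivity and surjectivity on such representatives.
-/

noncomputable section

variable (p : ℕ) [Fact p.Prime] (k : Type) [Field k] [Fintype k] [CharP k p]

instance : CharP (LaurentSeries k) p :=
  charP_of_injective_ringHom (HahnSeries.C_injective (Γ := ℤ) (R := k)) p

/-- The perfection of `K = k((t))`. -/
abbrev Kperf := PerfectClosure (LaurentSeries k) p

/-- The embedding `K → Kperf`. -/
abbrev ιK : LaurentSeries k →+* Kperf p k := PerfectClosure.of (LaurentSeries k) p

/-- The valuation ring of the perfection: `ξ` is integral iff whenever some `p^m`-th power of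
`ξ` comes from `K`, it lies in `O_K`. -/
def Operf : Set (Kperf p k) :=
  {ξ | ∀ (m : ℕ) (z : LaurentSeries k), ξ ^ (p ^ m) = ιK p k z → 0 ≤ z.orderTop}

/-- Inverse Frobenius iterated `n` times on the perfection. -/
def frI (n : ℕ) (ξ : Kperf p k) : Kperf p k :=
  (⇑(frobeniusEquiv (Kperf p k) p).symm)^[n] ξ

/-- Action of a twisted Laurent polynomial `∑ qᵢ τ^i` (`i ∈ ℤ`) on the perfection. -/
def twistedLaurentAct (q : LaurentPolynomial k) (ξ : Kperf p k) : Kperf p k :=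
  Finsupp.sum q.coeff fun i a => ιK p k (HahnSeries.C a) * ((frobeniusEquiv (Kperf p k) p ^ i) ξ)

/-!
Every `ζ ∈ K^perf` has a power `ζ ^ p ^ N` in `K`, and `ζ` is integral exactly when that element
of `K` is; this gives the last two claims at once. For the first, work in `K`: the valuations
`-j p^e` of the powers `ξ_j ^ p ^ e` run through every negative integer exactly once. Peeling off
leading terms shows that every element of `K` is congruent modulo `O_K` to a finite `k`-combination
of these powers, and a nonzero such combination is not integral, because the valuations of its
terms are negative and pairwise distinct. Since `k` is perfect, taking `p ^ N`-th roots turns these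
combinations into `R°`-combinations of the `ξ_j`, and a large power `p ^ M` turns any
`R°`-combination back into one of them.
-/

open HahnSeries

theorem HahnSeries.orderTop_sum_of_injOn {Γ R ι : Type*} [LinearOrder Γ] [AddCommMonoid R]
    {f : ι → R⟦Γ⟧} {s : Finset ι} (hf : Set.InjOn (fun i => (f i).orderTop) s) :
    (∑ i ∈ s, f i).orderTop = s.inf fun i => (f i).orderTop := by
  classical
  induction s using Finset.induction_on with
  | empty => simp
  | insert a s ha ih =>
    rw [Finset.sum_insert ha, Finset.inf_insert, ← ih (hf.mono (by simp))]
    rcases lt_trichotomy (f a).orderTop (∑ i ∈ s, f i).orderTop with h | h | h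
    · rw [orderTop_add_eq_left h, min_eq_left h.le]
    · rcases s.eq_empty_or_nonempty with rfl | hs
      · simp_all
      obtain ⟨b, hb, hab⟩ := s.exists_mem_eq_inf hs fun i => (f i).orderTop
      rw [ih (hf.mono (by simp)), hab] at h
      exact absurd (hf (by simp) (by simp [hb]) h ▸ hb) ha
    · rw [orderTop_add_eq_right h, min_eq_right h.le]

theorem HahnSeries.orderTop_pow {Γ R : Type*} [AddCommMonoid Γ] [LinearOrder Γ]
    [IsOrderedCancelAddMonoid Γ] [Semiring R] [Nontrivial R] [NoZeroDivisors R]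
    (x : R⟦Γ⟧) (n : ℕ) : (x ^ n).orderTop = n • x.orderTop := by
  induction n with
  | zero => simp
  | succ n ih => rw [pow_succ, orderTop_mul, ih, succ_nsmul]

theorem HahnSeries.leadingCoeff_C {Γ R : Type*} [AddCommMonoid Γ] [PartialOrder Γ]
    [IsOrderedCancelAddMonoid Γ] [Semiring R] (r : R) : (C r : R⟦Γ⟧).leadingCoeff = r := by
  rw [C_apply, leadingCoeff_of_single]

theorem Nat.eq_and_eq_of_mul_pow_eq_mul_pow {p : ℕ} [Fact p.Prime] {j j' e e' : ℕ}
    (hj : j ≠ 0) (hj' : j' ≠ 0) (hpj : ¬ p ∣ j) (hpj' : ¬ p ∣ j')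
    (h : j * p ^ e = j' * p ^ e') : j = j' ∧ e = e' := by
  have hval (i n : ℕ) (hi : i ≠ 0) (hpi : ¬ p ∣ i) : padicValNat p (i * p ^ n) = n := by
    rw [padicValNat.mul hi (pow_ne_zero _ (Fact.out : p.Prime).ne_zero),
      padicValNat.eq_zero_of_not_dvd hpi, padicValNat.prime_pow, zero_add]
  have he : e = e' := by rw [← hval j e hj hpj, h, hval j' e' hj' hpj']
  subst he
  exact ⟨Nat.eq_of_mul_eq_mul_right (pow_pos (Fact.out : p.Prime).pos e) h, rfl⟩

theorem WithTop.coe_lt_iff_coe_add_one_le {m : ℤ} {x : WithTop ℤ} :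
    (m : WithTop ℤ) < x ↔ ((m + 1 : ℤ) : WithTop ℤ) ≤ x := by
  cases x with
  | top => simp
  | coe x =>
    exact WithTop.coe_lt_coe.trans (Int.lt_iff_add_one_le.trans WithTop.coe_le_coe.symm)

abbrev PoleIndex (q : ℕ) := {j : ℕ // 0 < j ∧ ¬ q ∣ j}

section LaurentSeries

variable {F : Type*} [Field F] (p : ℕ) (ξ : PoleIndex p → LaurentSeries F)

def powerCombination : (PoleIndex p × ℕ →₀ F) →+ LaurentSeries F :=
  Finsupp.liftAddHom fun je => (AddMonoidHom.mulRight (ξ je.1 ^ p ^ je.2)).comp C.toAddMonoidHom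

theorem powerCombination_apply (b : PoleIndex p × ℕ →₀ F) :
    powerCombination p ξ b = b.sum fun je a => C a * ξ je.1 ^ p ^ je.2 :=
  rfl

theorem powerCombination_single (je : PoleIndex p × ℕ) (a : F) :
    powerCombination p ξ (Finsupp.single je a) = C a * ξ je.1 ^ p ^ je.2 :=
  Finsupp.liftAddHom_apply_single _ _ _

variable {ξ} (hξ : ∀ j, (ξ j).orderTop = ((-(j.1 : ℤ) : ℤ) : WithTop ℤ))
include hξ

theorem orderTop_C_mul_pow {a : F} (ha : a ≠ 0) (j : PoleIndex p) (e : ℕ) :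
    (C a * ξ j ^ p ^ e).orderTop = ((-(j.1 * p ^ e : ℕ) : ℤ) : WithTop ℤ) := by
  rw [orderTop_mul, C_apply, orderTop_single ha, orderTop_pow, hξ, ← WithTop.coe_nsmul,
    ← WithTop.coe_add, WithTop.coe_inj]
  push_cast
  ring

theorem exists_lt_orderTop_sub_C_mul_pow (hp : p ≠ 1) {y : LaurentSeries F} {n : ℕ}
    (hn : 0 < n) (hy : y.orderTop = ((-n : ℤ) : WithTop ℤ)) :
    ∃ (j : PoleIndex p) (e : ℕ) (a : F),
      ((-n : ℤ) : WithTop ℤ) < (y - C a * ξ j ^ p ^ e).orderTop := by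
  obtain ⟨e, j, hpj, rfl⟩ := Nat.exists_eq_pow_mul_and_not_dvd hn.ne' p hp
  let J : PoleIndex p := ⟨j, Nat.pos_of_mul_pos_left hn, hpj⟩
  have hy0 : y ≠ 0 := fun h => by rw [h, orderTop_zero] at hy; exact WithTop.top_ne_coe hy
  have ht0 : ξ J ^ p ^ e ≠ 0 := pow_ne_zero _ (orderTop_ne_top.1 (by simp [hξ]))
  set a := y.leadingCoeff / (ξ J ^ p ^ e).leadingCoeff
  have ha : a ≠ 0 := div_ne_zero (leadingCoeff_ne_zero.2 hy0) (leadingCoeff_ne_zero.2 ht0)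
  refine ⟨J, e, a, le_orderTop_of_leadingCoeff_eq hy ?_ ?_⟩
  · rw [orderTop_C_mul_pow p hξ ha, mul_comm]
  · rw [leadingCoeff_mul, leadingCoeff_C, div_mul_cancel₀ _ (leadingCoeff_ne_zero.2 ht0)]

theorem exists_powerCombination_approx_of_le (hp : p ≠ 1) (n : ℕ) (y : LaurentSeries F)
    (hy : ((-n : ℤ) : WithTop ℤ) ≤ y.orderTop) :
    ∃ b, 0 ≤ (y - powerCombination p ξ b).orderTop := by
  induction n generalizing y with
  | zero => exact ⟨0, by simpa using hy⟩
  | succ n ih =>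
    have hsucc : (-(n + 1 : ℕ) : ℤ) + 1 = -n := by push_cast; ring
    by_cases h : ((-n : ℤ) : WithTop ℤ) ≤ y.orderTop
    · exact ih y h
    have hy' : y.orderTop = ((-(n + 1 : ℕ) : ℤ) : WithTop ℤ) := by
      refine le_antisymm (not_lt.1 fun hlt => h ?_) hy
      rwa [WithTop.coe_lt_iff_coe_add_one_le, hsucc] at hlt
    obtain ⟨j, e, a, hlt⟩ := exists_lt_orderTop_sub_C_mul_pow p hξ hp n.succ_pos hy'
    rw [WithTop.coe_lt_iff_coe_add_one_le, hsucc] at hlt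
    obtain ⟨b, hb⟩ := ih _ hlt
    refine ⟨b + Finsupp.single (j, e) a, ?_⟩
    rwa [map_add, powerCombination_single, sub_add_eq_sub_sub_swap]

theorem exists_powerCombination_approx (hp : p ≠ 1) (y : LaurentSeries F) :
    ∃ b, 0 ≤ (y - powerCombination p ξ b).orderTop := by
  obtain ⟨n, hn⟩ : ∃ n : ℕ, ((-n : ℤ) : WithTop ℤ) ≤ y.orderTop := by
    cases y.orderTop with
    | top => exact ⟨0, le_top⟩
    | coe m => exact ⟨m.natAbs, WithTop.coe_le_coe.2 (by omega)⟩
  exact exists_powerCombination_approx_of_le p hξ hp n y hn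

theorem orderTop_sum_C_mul_pow_lt_zero [Fact p.Prime] {σ : Type*} {s : Finset σ}
    (hs : s.Nonempty) {g : σ → PoleIndex p × ℕ} (hg : Set.InjOn g s) {a : σ → F}
    (ha : ∀ i ∈ s, a i ≠ 0) :
    (∑ i ∈ s, C (a i) * ξ (g i).1 ^ p ^ (g i).2).orderTop < 0 := by
  have hord (i) (hi : i ∈ s) := orderTop_C_mul_pow p hξ (ha i hi) (g i).1 (g i).2
  rw [orderTop_sum_of_injOn]
  · obtain ⟨i, hi, hinf⟩ :=
      s.exists_mem_eq_inf hs fun i => (C (a i) * ξ (g i).1 ^ p ^ (g i).2).orderTop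
    rw [hinf, hord i hi, ← WithTop.coe_zero, WithTop.coe_lt_coe, neg_neg_iff_pos, Nat.cast_pos]
    exact Nat.mul_pos (g i).1.2.1 (pow_pos (Fact.out : p.Prime).pos _)
  · intro i hi i' hi' h
    simp only [hord i hi, hord i' hi', WithTop.coe_inj, neg_inj, Nat.cast_inj] at h
    obtain ⟨h1, h2⟩ := Nat.eq_and_eq_of_mul_pow_eq_mul_pow (g i).1.2.1.ne' (g i').1.2.1.ne'
      (g i).1.2.2 (g i').1.2.2 h
    exact hg hi hi' (Prod.ext (Subtype.ext h1) h2)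

end LaurentSeries

section PerfectRing

variable {R : Type*} [CommSemiring R] (p : ℕ) [ExpChar R p] [PerfectRing R p]

theorem frobeniusEquiv_zpow_natCast_apply (n : ℕ) (x : R) :
    (frobeniusEquiv R p ^ (n : ℤ)) x = x ^ p ^ n := by
  rw [zpow_natCast, ← iterateFrobeniusEquiv_eq_pow, iterateFrobeniusEquiv_def]

theorem frobeniusEquiv_zpow_apply_pow (i : ℤ) (n : ℕ) (x : R) :
    (frobeniusEquiv R p ^ i) x ^ p ^ n = (frobeniusEquiv R p ^ (i + n)) x := by
  rw [← frobeniusEquiv_zpow_natCast_apply, add_comm, zpow_add]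
  rfl

end PerfectRing

section Perfection

variable (k : Type) [Field k] [CharP k p]

theorem frI_eq_iterateFrobeniusEquiv_symm (n : ℕ) :
    frI p k n = (iterateFrobeniusEquiv (Kperf p k) p n).symm := by
  rw [iterateFrobeniusEquiv_symm, RingAut.coe_pow]
  rfl

theorem frI_pow (n : ℕ) (ζ : Kperf p k) : frI p k n ζ ^ p ^ n = ζ := by
  rw [frI_eq_iterateFrobeniusEquiv_symm, ← iterateFrobeniusEquiv_def, RingEquiv.apply_symm_apply]

theorem frI_eq_of_pow_eq {n : ℕ} {ζ ξ : Kperf p k} (h : ζ ^ p ^ n = ξ) :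
    frI p k n ξ = ζ := by
  rw [frI_eq_iterateFrobeniusEquiv_symm, RingEquiv.symm_apply_eq, iterateFrobeniusEquiv_def, h]

theorem mem_Operf_iff {n : ℕ} {x : LaurentSeries k} {ζ : Kperf p k}
    (h : ζ ^ p ^ n = ιK p k x) :
    ζ ∈ Operf p k ↔ 0 ≤ x.orderTop := by
  refine ⟨fun hζ => hζ n x h, fun hx m z hz => ?_⟩
  have hxz : x ^ p ^ m = z ^ p ^ n := (ιK p k).injective <| by
    rw [map_pow, map_pow, ← h, ← hz, ← pow_mul, ← pow_mul, mul_comm]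
  have hval := congrArg orderTop hxz
  rw [orderTop_pow, orderTop_pow] at hval
  rw [← nsmul_nonneg_iff (pow_ne_zero n (Fact.out : p.Prime).ne_zero), ← hval]
  exact nsmul_nonneg hx _

theorem zero_mem_Operf : (0 : Kperf p k) ∈ Operf p k :=
  (mem_Operf_iff p k (n := 0) (x := 0) (by simp)).2 (by simp)

theorem sub_mem_Operf {a b : Kperf p k} (ha : a ∈ Operf p k) (hb : b ∈ Operf p k) :
    a - b ∈ Operf p k := by
  obtain ⟨n, x, hx⟩ := IsPRadical.pow_mem (ιK p k) p a
  obtain ⟨m, y, hy⟩ := IsPRadical.pow_mem (ιK p k) p b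
  have h : (a - b) ^ p ^ (n + m) = ιK p k (x ^ p ^ m - y ^ p ^ n) := by
    rw [sub_pow_expChar_pow, map_sub, map_pow, map_pow, hx, hy, ← pow_mul, ← pow_mul,
      ← _root_.pow_add, ← _root_.pow_add, add_comm m n]
  have hx' := nsmul_nonneg ((mem_Operf_iff p k hx.symm).1 ha) (p ^ m)
  have hy' := nsmul_nonneg ((mem_Operf_iff p k hy.symm).1 hb) (p ^ n)
  rw [← orderTop_pow] at hx' hy'
  rw [mem_Operf_iff p k h]
  exact (le_min hx' hy').trans min_orderTop_le_orderTop_sub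

theorem twistedLaurentAct_add (q₁ q₂ : LaurentPolynomial k) (ζ : Kperf p k) :
    twistedLaurentAct p k (q₁ + q₂) ζ
      = twistedLaurentAct p k q₁ ζ + twistedLaurentAct p k q₂ ζ :=
  Finsupp.sum_add_index' (fun _ => by simp) fun _ _ _ => by rw [map_add, map_add, add_mul]

theorem twistedLaurentAct_single (i : ℤ) (a : k) (ζ : Kperf p k) :
    twistedLaurentAct p k (AddMonoidAlgebra.single i a) ζ
      = ιK p k (C a) * (frobeniusEquiv (Kperf p k) p ^ i) ζ :=
  Finsupp.sum_single_index (by simp)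

theorem twistedLaurentAct_eq_sum_single (q : LaurentPolynomial k) (ζ : Kperf p k) :
    twistedLaurentAct p k q ζ
      = ∑ i ∈ q.coeff.support,
          twistedLaurentAct p k (AddMonoidAlgebra.single i (q.coeff i)) ζ := by
  simp only [twistedLaurentAct_single]
  rfl

theorem twistedLaurentAct_single_pow (i : ℤ) (a : k) (n : ℕ) (ζ : Kperf p k) :
    twistedLaurentAct p k (AddMonoidAlgebra.single i a) ζ ^ p ^ n
      = twistedLaurentAct p k (AddMonoidAlgebra.single (i + n) (a ^ p ^ n)) ζ := by
  rw [twistedLaurentAct_single, twistedLaurentAct_single, mul_pow, frobeniusEquiv_zpow_apply_pow,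
    ← map_pow, ← map_pow]

theorem twistedLaurentAct_single_natCast_ιK (e : ℕ) (a : k) (x : LaurentSeries k) :
    twistedLaurentAct p k (AddMonoidAlgebra.single (e : ℤ) a) (ιK p k x)
      = ιK p k (C a * x ^ p ^ e) := by
  rw [twistedLaurentAct_single, frobeniusEquiv_zpow_natCast_apply, map_mul, map_pow]

variable {k} (ξ : PoleIndex p → LaurentSeries k)

def twistedCombination : (PoleIndex p →₀ LaurentPolynomial k) →+ Kperf p k :=
  Finsupp.liftAddHom fun j =>
    AddMonoidHom.mk' (twistedLaurentAct p k · (ιK p k (ξ j)))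
      fun _ _ => twistedLaurentAct_add p k _ _ _

theorem twistedCombination_apply (c : PoleIndex p →₀ LaurentPolynomial k) :
    twistedCombination p ξ c = c.sum fun j q => twistedLaurentAct p k q (ιK p k (ξ j)) :=
  rfl

theorem twistedCombination_single (j : PoleIndex p) (q : LaurentPolynomial k) :
    twistedCombination p ξ (Finsupp.single j q) = twistedLaurentAct p k q (ιK p k (ξ j)) :=
  Finsupp.liftAddHom_apply_single _ _ _

theorem exists_twistedCombination_pow_eq [PerfectRing k p] (N : ℕ)
    (b : PoleIndex p × ℕ →₀ k) :
    ∃ c, twistedCombination p ξ c ^ p ^ N = ιK p k (powerCombination p ξ b) := by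
  refine ⟨b.sum fun je a => Finsupp.single je.1
    (AddMonoidAlgebra.single (je.2 - N : ℤ) ((iterateFrobeniusEquiv k p N).symm a)), ?_⟩
  rw [map_finsuppSum, Finsupp.sum, sum_pow_char_pow, powerCombination_apply, map_finsuppSum]
  refine Finset.sum_congr rfl fun je _ => ?_
  rw [twistedCombination_single, twistedLaurentAct_single_pow, sub_add_cancel,
    ← iterateFrobeniusEquiv_def, RingEquiv.apply_symm_apply, twistedLaurentAct_single_natCast_ιK]

theorem eq_zero_of_twistedCombination_mem_Operf
    (hξ : ∀ j, (ξ j).orderTop = ((-(j.1 : ℤ) : ℤ) : WithTop ℤ))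
    (d : PoleIndex p →₀ LaurentPolynomial k) (hd : twistedCombination p ξ d ∈ Operf p k) :
    d = 0 := by
  by_contra hd0
  set P := d.support.sigma fun j => (d j).coeff.support
  have hP : P.Nonempty := by
    obtain ⟨j, hj⟩ := Finsupp.support_nonempty_iff.2 hd0
    refine Finset.sigma_nonempty.2 ⟨j, hj, Finsupp.support_nonempty_iff.2 fun h => ?_⟩
    exact Finsupp.mem_support_iff.1 hj (AddMonoidAlgebra.coeff_injective h)
  obtain ⟨M, hM⟩ : ∃ M : ℕ, ∀ s ∈ P, 0 ≤ s.2 + M := by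
    obtain ⟨L, hL⟩ := (P.image Sigma.snd).bddBelow
    exact ⟨(-L).toNat, fun s hs => by
      have := hL (Finset.mem_image_of_mem Sigma.snd hs); omega⟩
  have hpow : twistedCombination p ξ d ^ p ^ M = ιK p k (∑ s ∈ P,
      C ((d s.1).coeff s.2 ^ p ^ M) * ξ s.1 ^ p ^ (s.2 + M).toNat) := by
    rw [twistedCombination_apply, Finsupp.sum,
      Finset.sum_congr rfl fun j _ => twistedLaurentAct_eq_sum_single p k (d j) _,
      Finset.sum_sigma', sum_pow_char_pow, map_sum]
    refine Finset.sum_congr rfl fun s hs => ?_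
    rw [twistedLaurentAct_single_pow, ← Int.toNat_of_nonneg (hM s hs),
      twistedLaurentAct_single_natCast_ιK, Int.toNat_natCast]
  refine ((mem_Operf_iff p k hpow).1 hd).not_gt
    (orderTop_sum_C_mul_pow_lt_zero p hξ hP (g := fun s => (s.1, (s.2 + M).toNat)) ?_ ?_)
  · rintro ⟨j, i⟩ hs ⟨j', i'⟩ hs' h
    simp only [Prod.mk.injEq] at h
    obtain ⟨rfl, h⟩ := h
    have hi : 0 ≤ i + M := hM _ hs
    have hi' : 0 ≤ i' + M := hM _ hs'
    obtain rfl : i = i' := by omega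
    rfl
  · intro s hs
    exact pow_ne_zero _ (Finsupp.mem_support_iff.1 (Finset.mem_sigma.1 hs).2)

end Perfection

theorem perfection_quotient_free_over_twisted_laurent
    (ξ : {j : ℕ // 0 < j ∧ ¬ p ∣ j} → LaurentSeries k)
    (hξ : ∀ j, (ξ j).orderTop = ((-(j.1 : ℤ) : ℤ) : WithTop ℤ)) :
    (∀ m : Kperf p k,
      ∃! c : {j : ℕ // 0 < j ∧ ¬ p ∣ j} →₀ LaurentPolynomial k,
        (m - c.sum fun j q => twistedLaurentAct p k q (ιK p k (ξ j))) ∈ Operf p k) ∧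
    (∀ (n : ℕ) (z : LaurentSeries k), frI p k n (ιK p k z) ∈ Operf p k → 0 ≤ z.orderTop) ∧
    (∀ m : Kperf p k, ∃ (n : ℕ) (z : LaurentSeries k),
        m - frI p k n (ιK p k z) ∈ Operf p k) := by
  refine ⟨fun m => ?_, fun n z h => h n z (frI_pow p k n _), fun m => ?_⟩
  · obtain ⟨N, x, hx⟩ := IsPRadical.pow_mem (ιK p k) p m
    obtain ⟨b, hb⟩ := exists_powerCombination_approx p hξ (Fact.out : p.Prime).ne_one x
    obtain ⟨c, hc⟩ := exists_twistedCombination_pow_eq p ξ N b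
    have hmem : m - twistedCombination p ξ c ∈ Operf p k :=
      (mem_Operf_iff p k (by rw [sub_pow_expChar_pow, hc, ← hx, map_sub])).2 hb
    refine ⟨c, hmem, fun c' hc' => ?_⟩
    have hdiff := sub_mem_Operf p k hmem hc'
    rw [← twistedCombination_apply, sub_sub_sub_cancel_left, ← map_sub] at hdiff
    exact sub_eq_zero.1 (eq_zero_of_twistedCombination_mem_Operf p ξ hξ _ hdiff)
  · obtain ⟨n, x, hx⟩ := IsPRadical.pow_mem (ιK p k) p m
    refine ⟨n, x, ?_⟩
    rw [frI_eq_of_pow_eq p k hx.symm, sub_self]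
    exact zero_mem_Operf p k

end
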